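/- arXiv:1512.07094 — 5 statements merged into one kernel-verified Lean document; each statement's English description precedes it below -/
import Mathlib

section
/- Let (γ₁, ..., γᵣ) be a partition realized as consecutive blocks [a₁,b₁], ..., [aᵣ,bᵣ] of integers with a_{i+1} = b_i + 1 and γᵢ = bᵢ - aᵢ + 1. For any 1 ≤ i ≤ r-1, the number of intervals Λ_j(k) = [j+1, j+k] covering at least one block of the full partition equals the number covering at least one of the first i blocks, plus the number covering at least one of the last r - i blocks, minus the number of intervals [j+1, j+k] containing the merged block [a_i, b_{i+1}] of length γ_i + γ_{i+1}. -/
/-- Inclusion–exclusion step for the covering count `q̃` (Lemma 5.1 ii of the paper).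
Blocks `[a i, b i]`, `i = 1, …, r`, are consecutive (`a (i+1) = b i + 1`). For
`1 ≤ i ≤ r - 1`, the number of intervals `[j+1, j+k]` covering (containing) at least
one block of the full partition equals the number covering one of the first `i` blocks,
plus the number covering one of the last `r - i` blocks, minus the number of intervals
containing the merged block `[a i, b (i+1)]`. -/
theorem stmt2 (r : ℕ) (k : ℤ) (hk : 1 ≤ k) (a b : ℕ → ℤ)
    (hlen : ∀ n ∈ Finset.Icc 1 r, a n ≤ b n)
    (hcons : ∀ n ∈ Finset.Icc 1 (r - 1), a (n + 1) = b n + 1)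
    (i : ℕ) (hi1 : 1 ≤ i) (hir : i ≤ r - 1) :
    ({j : ℤ | ∃ n ∈ Finset.Icc 1 r, Set.Icc (a n) (b n) ⊆ Set.Icc (j + 1) (j + k)}.ncard : ℤ)
      = ({j : ℤ | ∃ n ∈ Finset.Icc 1 i, Set.Icc (a n) (b n) ⊆ Set.Icc (j + 1) (j + k)}.ncard : ℤ)
        + ({j : ℤ | ∃ n ∈ Finset.Icc (i + 1) r, Set.Icc (a n) (b n) ⊆ Set.Icc (j + 1) (j + k)}.ncard : ℤ)
        - ({j : ℤ | Set.Icc (a i) (b (i + 1)) ⊆ Set.Icc (j + 1) (j + k)}.ncard : ℤ) := by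
  have hr2 : 2 ≤ r := by omega
  -- monotonicity of a and b
  have mono : ∀ m, m ≤ r → ∀ n, 1 ≤ n → n ≤ m → a n ≤ a m ∧ b n ≤ b m := by
    intro m
    induction m with
    | zero => intro _ n h1 h2; omega
    | succ m ih =>
      intro hmr n h1 h2
      rcases Nat.lt_or_ge n (m + 1) with h | h
      · have h3 := ih (by omega) n h1 (by omega)
        have hc := hcons m (Finset.mem_Icc.mpr ⟨by omega, by omega⟩)
        have hab := hlen m (Finset.mem_Icc.mpr ⟨by omega, by omega⟩)
        have hab' := hlen (m + 1) (Finset.mem_Icc.mpr ⟨by omega, hmr⟩)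
        constructor <;> omega
      · have : n = m + 1 := by omega
        subst this; exact ⟨le_rfl, le_rfl⟩
  -- finiteness
  have hfin : ∀ (s : Finset ℕ), (∀ n ∈ s, a n ≤ b n) →
      {j : ℤ | ∃ n ∈ s, Set.Icc (a n) (b n) ⊆ Set.Icc (j + 1) (j + k)}.Finite := by
    intro s hs
    have : {j : ℤ | ∃ n ∈ s, Set.Icc (a n) (b n) ⊆ Set.Icc (j + 1) (j + k)}
        ⊆ ⋃ n ∈ s, Set.Icc (a n - k) (a n - 1) := by
      rintro j ⟨n, hn, hsub⟩
      have := hsub (Set.left_mem_Icc.mpr (hs n hn))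
      simp only [Set.mem_Icc] at this
      exact Set.mem_biUnion hn (Set.mem_Icc.mpr ⟨by omega, by omega⟩)
    exact Set.Finite.subset (Set.Finite.biUnion s.finite_toSet
      (fun n _ => Set.finite_Icc _ _)) this
  set A := {j : ℤ | ∃ n ∈ Finset.Icc 1 i, Set.Icc (a n) (b n) ⊆ Set.Icc (j + 1) (j + k)}
  set B := {j : ℤ | ∃ n ∈ Finset.Icc (i + 1) r, Set.Icc (a n) (b n) ⊆ Set.Icc (j + 1) (j + k)}
  have hA : A.Finite := hfin _ (fun n hn => hlen n (by
    simp only [Finset.mem_Icc] at hn ⊢; omega))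
  have hB : B.Finite := hfin _ (fun n hn => hlen n (by
    simp only [Finset.mem_Icc] at hn ⊢; omega))
  have hU : {j : ℤ | ∃ n ∈ Finset.Icc 1 r, Set.Icc (a n) (b n) ⊆ Set.Icc (j + 1) (j + k)}
      = A ∪ B := by
    ext j
    simp only [A, B, Set.mem_setOf_eq, Set.mem_union, Finset.mem_Icc]
    constructor
    · rintro ⟨n, hn, hsub⟩
      rcases le_or_gt n i with h | h
      · exact Or.inl ⟨n, ⟨hn.1, h⟩, hsub⟩
      · exact Or.inr ⟨n, ⟨h, hn.2⟩, hsub⟩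
    · rintro (⟨n, hn, hsub⟩ | ⟨n, hn, hsub⟩)
      · exact ⟨n, ⟨hn.1, by omega⟩, hsub⟩
      · exact ⟨n, ⟨by omega, hn.2⟩, hsub⟩
  have hI : A ∩ B = {j : ℤ | Set.Icc (a i) (b (i + 1)) ⊆ Set.Icc (j + 1) (j + k)} := by
    have hbi : b i ≤ b (i + 1) := by
      have hc := hcons i (Finset.mem_Icc.mpr ⟨hi1, hir⟩)
      have := hlen (i + 1) (Finset.mem_Icc.mpr ⟨by omega, by omega⟩)
      omega
    have hai : a i ≤ a (i + 1) := by
      have hc := hcons i (Finset.mem_Icc.mpr ⟨hi1, hir⟩)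
      have := hlen i (Finset.mem_Icc.mpr ⟨hi1, by omega⟩)
      omega
    ext j
    simp only [A, B, Set.mem_inter_iff, Set.mem_setOf_eq, Finset.mem_Icc]
    constructor
    · rintro ⟨⟨n, hn, hsub1⟩, ⟨m, hm, hsub2⟩⟩
      have hlen_n := hlen n (Finset.mem_Icc.mpr ⟨hn.1, by omega⟩)
      have hlen_m := hlen m (Finset.mem_Icc.mpr ⟨by omega, hm.2⟩)
      have h1 := hsub1 (Set.left_mem_Icc.mpr hlen_n)
      have h2 := hsub2 (Set.right_mem_Icc.mpr hlen_m)
      simp only [Set.mem_Icc] at h1 h2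
      have hani : a n ≤ a i := (mono i (by omega) n hn.1 hn.2).1
      have hbmi : b (i + 1) ≤ b m := (mono m hm.2 (i + 1) (by omega) hm.1).2
      exact Set.Icc_subset_Icc (by omega) (by omega)
    · intro hsub
      refine ⟨⟨i, ⟨hi1, le_rfl⟩, (Set.Icc_subset_Icc le_rfl hbi).trans hsub⟩,
        ⟨i + 1, ⟨le_rfl, by omega⟩, (Set.Icc_subset_Icc hai le_rfl).trans hsub⟩⟩
  have key := Set.ncard_union_add_ncard_inter A B hA hB
  rw [hU, ← hI]
  have key' : ((A ∪ B).ncard : ℤ) + (A ∩ B).ncard = A.ncard + B.ncard := by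
    exact_mod_cast key
  omega
end

section
/- Let (γ₁, ..., γᵣ) be positive integers, realized as consecutive blocks [aᵢ, bᵢ] with a_{i+1} = b_i + 1 and γᵢ = bᵢ - aᵢ + 1. Then the number q̃(k, γ₁, ..., γᵣ) of integers j such that the interval [j+1, j+k] contains at least one block [aᵢ, bᵢ] equals Σ_{i=1}^{r} [[k - γᵢ + 1]] - Σ_{i=1}^{r-1} [[k - γ_{i+1} - γᵢ + 1]]. -/
lemma icc_ncard_aux (x y : ℤ) : ((Set.Icc x y).ncard : ℤ) = max 0 (y - x + 1) := by
  rw [← Finset.coe_Icc, Set.ncard_coe_finset, Int.card_Icc]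
  omega

lemma union_card_aux (l u : ℕ → ℤ) (r : ℕ) (hr : 1 ≤ r)
    (hmono : ∀ m n, 1 ≤ m → m ≤ n → n ≤ r → l m ≤ l n ∧ u m ≤ u n) :
    ((⋃ n ∈ Finset.Icc 1 r, Set.Icc (l n) (u n)).ncard : ℤ)
      = (∑ n ∈ Finset.Icc 1 r, max 0 (u n - l n + 1))
        - ∑ n ∈ Finset.Icc 1 (r - 1), max 0 (u n - l (n + 1) + 1) := by
  induction r, hr using Nat.le_induction with
  | base => simp [icc_ncard_aux]
  | succ r hr ih =>
    set A := ⋃ n ∈ Finset.Icc 1 r, Set.Icc (l n) (u n) with hA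
    set B := Set.Icc (l (r+1)) (u (r+1)) with hB
    have hAfin : A.Finite :=
      Set.Finite.biUnion (Finset.Icc 1 r).finite_toSet (fun i _ => Set.finite_Icc _ _)
    have hBfin : B.Finite := Set.finite_Icc _ _
    have hsplit : (⋃ n ∈ Finset.Icc 1 (r+1), Set.Icc (l n) (u n)) = A ∪ B := by
      ext x
      simp only [hA, hB, Set.mem_iUnion, Set.mem_union, Finset.mem_Icc, Set.mem_Icc]
      constructor
      · rintro ⟨i, ⟨h1, h2⟩, hx⟩
        by_cases hi : i = r + 1
        · right; rw [← hi]; exact hx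
        · left; exact ⟨i, ⟨h1, by omega⟩, hx⟩
      · rintro (⟨i, ⟨h1, h2⟩, hx⟩ | hx)
        · exact ⟨i, ⟨h1, by omega⟩, hx⟩
        · exact ⟨r + 1, ⟨by omega, le_rfl⟩, hx⟩
    have hinter : A ∩ B = Set.Icc (l (r+1)) (u r) := by
      ext x
      simp only [hA, hB, Set.mem_inter_iff, Set.mem_iUnion, Finset.mem_Icc, Set.mem_Icc]
      constructor
      · rintro ⟨⟨i, ⟨h1, h2⟩, hx1, hx2⟩, hy1, hy2⟩
        exact ⟨hy1, hx2.trans (hmono i r h1 h2 (by omega)).2⟩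
      · rintro ⟨h1, h2⟩
        have hm := hmono r (r+1) hr (by omega) le_rfl
        exact ⟨⟨r, ⟨hr, le_rfl⟩, hm.1.trans h1, h2⟩, h1, h2.trans hm.2⟩
    have key := Set.ncard_union_add_ncard_inter A B hAfin hBfin
    have keyZ : ((A ∪ B).ncard : ℤ) + ((A ∩ B).ncard : ℤ) = (A.ncard : ℤ) + (B.ncard : ℤ) := by
      exact_mod_cast key
    have ihA : (A.ncard : ℤ)
        = (∑ n ∈ Finset.Icc 1 r, max 0 (u n - l n + 1))
          - ∑ n ∈ Finset.Icc 1 (r - 1), max 0 (u n - l (n + 1) + 1) :=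
      ih (fun m n hm hmn hnr => hmono m n hm hmn (by omega))
    have hBc : (B.ncard : ℤ) = max 0 (u (r+1) - l (r+1) + 1) := icc_ncard_aux _ _
    have hIc : ((A ∩ B).ncard : ℤ) = max 0 (u r - l (r+1) + 1) := by
      rw [hinter]; exact icc_ncard_aux _ _
    have hsum1 : (∑ n ∈ Finset.Icc 1 (r+1), max 0 (u n - l n + 1))
        = (∑ n ∈ Finset.Icc 1 r, max 0 (u n - l n + 1)) + max 0 (u (r+1) - l (r+1) + 1) :=
      Finset.sum_Icc_succ_top (by omega) _
    have hr1 : r - 1 + 1 = r := by omega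
    have hsum2 : (∑ n ∈ Finset.Icc 1 (r + 1 - 1), max 0 (u n - l (n + 1) + 1))
        = (∑ n ∈ Finset.Icc 1 (r - 1), max 0 (u n - l (n + 1) + 1)) + max 0 (u r - l (r+1) + 1) := by
      have := Finset.sum_Icc_succ_top (a := 1) (b := r - 1)
        (f := fun n => max 0 (u n - l (n + 1) + 1)) (by omega)
      rw [hr1] at this
      simpa using this
    rw [hsplit, hsum1, hsum2]
    linarith [keyZ, ihA, hBc, hIc]


/-- Lemma 5.2 of the paper: the covering count
`q̃(k, γ₁, …, γᵣ) = Σᵢ [[k - γᵢ + 1]] - Σᵢ [[k - γ_{i+1} - γᵢ + 1]]`,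
where `[[z]] = max 0 z`, the `i`-th block is `[a i, b i]`, blocks are consecutive
(`a (i+1) = b i + 1`) and `γ i = b i - a i + 1 ≥ 1`. -/
theorem stmt3 (r : ℕ) (hr : 1 ≤ r) (k : ℤ) (hk : 1 ≤ k) (a b γ : ℕ → ℤ)
    (hγ : ∀ n ∈ Finset.Icc 1 r, γ n = b n - a n + 1)
    (hpos : ∀ n ∈ Finset.Icc 1 r, 1 ≤ γ n)
    (hcons : ∀ n ∈ Finset.Icc 1 (r - 1), a (n + 1) = b n + 1) :
    ({j : ℤ | ∃ n ∈ Finset.Icc 1 r, Set.Icc (a n) (b n) ⊆ Set.Icc (j + 1) (j + k)}.ncard : ℤ)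
      = (∑ n ∈ Finset.Icc 1 r, max 0 (k - γ n + 1))
        - ∑ n ∈ Finset.Icc 1 (r - 1), max 0 (k - γ (n + 1) - γ n + 1) := by
  have step : ∀ n, 1 ≤ n → n < r → a n ≤ a (n+1) ∧ b n ≤ b (n+1) := by
    intro n h1 h2
    have hc := hcons n (Finset.mem_Icc.mpr ⟨h1, by omega⟩)
    have hg1 := hγ n (Finset.mem_Icc.mpr ⟨h1, by omega⟩)
    have hg2 := hγ (n+1) (Finset.mem_Icc.mpr ⟨by omega, by omega⟩)
    have hp1 := hpos n (Finset.mem_Icc.mpr ⟨h1, by omega⟩)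
    have hp2 := hpos (n+1) (Finset.mem_Icc.mpr ⟨by omega, by omega⟩)
    omega
  have mono : ∀ m n, 1 ≤ m → m ≤ n → n ≤ r → a m ≤ a n ∧ b m ≤ b n := by
    intro m n hm hmn
    induction n, hmn using Nat.le_induction with
    | base => exact fun _ => ⟨le_rfl, le_rfl⟩
    | succ n hmn ih =>
      intro hnr
      have h1 := ih (by omega)
      have h2 := step n (by omega) (by omega)
      exact ⟨h1.1.trans h2.1, h1.2.trans h2.2⟩
  have hset : {j : ℤ | ∃ n ∈ Finset.Icc 1 r, Set.Icc (a n) (b n) ⊆ Set.Icc (j + 1) (j + k)}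
      = ⋃ n ∈ Finset.Icc 1 r, Set.Icc (b n - k) (a n - 1) := by
    ext j
    simp only [Set.mem_setOf_eq, Set.mem_iUnion, Set.mem_Icc, Finset.mem_Icc]
    constructor
    · rintro ⟨n, hn, hsub⟩
      have hg := hγ n (Finset.mem_Icc.mpr hn)
      have hp := hpos n (Finset.mem_Icc.mpr hn)
      have hab : a n ≤ b n := by omega
      have := (Set.Icc_subset_Icc_iff hab).mp hsub
      exact ⟨n, hn, by omega, by omega⟩
    · rintro ⟨n, hn, h1, h2⟩
      exact ⟨n, hn, Set.Icc_subset_Icc (by omega) (by omega)⟩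
  have hmono : ∀ m n, 1 ≤ m → m ≤ n → n ≤ r →
      (fun n => b n - k) m ≤ (fun n => b n - k) n ∧
      (fun n => a n - 1) m ≤ (fun n => a n - 1) n := by
    intro m n hm hmn hnr
    have := mono m n hm hmn hnr
    constructor <;> simp <;> omega
  have haux := union_card_aux (fun n => b n - k) (fun n => a n - 1) r hr hmono
  rw [hset, haux]
  congr 1
  · refine Finset.sum_congr rfl (fun n hn => ?_)
    have hg := hγ n hn
    rw [show a n - 1 - (b n - k) + 1 = k - γ n + 1 by omega]
  · refine Finset.sum_congr rfl (fun n hn => ?_)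
    rw [Finset.mem_Icc] at hn
    have hg1 := hγ n (Finset.mem_Icc.mpr ⟨hn.1, by omega⟩)
    have hg2 := hγ (n+1) (Finset.mem_Icc.mpr ⟨by omega, by omega⟩)
    have hc := hcons n (Finset.mem_Icc.mpr hn)
    rw [show a n - 1 - (b (n+1) - k) + 1 = k - γ (n+1) - γ n + 1 by omega]
end

section
/- Let b₁, ..., bᵣ be nonnegative integers (r ≥ 2), set λ := Σᵢ(bᵢ + 2), and define for integer k ∈ [2, λ]: φ(k) = Σ_{i=1}^{r}(bᵢ - k + 1) + (λ - k + 1) + Σ_{i=1}^{r-1}[[k - b_{i+1} - bᵢ - 3]] + [[k - b₁ - 2]] + [[k - bᵣ - 2]]. Then the second difference Δ²φ(k) = φ(k+2) - 2φ(k+1) + φ(k) equals the number of indices i ∈ {1, ..., r-1} with k = bᵢ + b_{i+1} + 2, plus 1 if k = b₁ + 1 (counted once), plus 1 if k = bᵣ + 1 (counted once); equivalently, setting b₀ = b_{r+1} = -1, Δ²φ(k) = #{i ∈ {0, ..., r} : k = bᵢ + b_{i+1} + 2}. -/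
/-- Theorem 5.6 (and Remark 5.7) of the paper. Let `b 1, …, b r ≥ 0` (`r ≥ 2`),
`λ = Σᵢ (b i + 2)`, and
`φ k = Σᵢ (b i - k + 1) + (λ - k + 1) + Σ_{i=1}^{r-1} [[k - b (i+1) - b i - 3]]
       + [[k - b 1 - 2]] + [[k - b r - 2]]` (extended to all `k ∈ ℤ`),
where `[[z]] = max 0 z`. Then for `2 ≤ k ≤ λ` the second difference
`Δ²φ k = φ (k+2) - 2 φ (k+1) + φ k` equals
`#{1 ≤ i ≤ r-1 : k = b i + b (i+1) + 2} + (1 if k = b 1 + 1) + (1 if k = b r + 1)`;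
equivalently, with the convention `b 0 = b (r+1) = -1`,
`Δ²φ k = #{0 ≤ i ≤ r : k = b i + b (i+1) + 2}`. -/
theorem stmt11 (r : ℕ) (hr : 2 ≤ r) (b : ℕ → ℤ)
    (hb : ∀ i ∈ Finset.Icc 1 r, 0 ≤ b i)
    (hb0 : b 0 = -1) (hbr : b (r + 1) = -1)
    (lam : ℤ) (hlam : lam = ∑ i ∈ Finset.Icc 1 r, (b i + 2))
    (φ : ℤ → ℤ)
    (hφ : ∀ k : ℤ, φ k =
        (∑ i ∈ Finset.Icc 1 r, (b i - k + 1)) + (lam - k + 1)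
          + (∑ i ∈ Finset.Icc 1 (r - 1), max 0 (k - b (i + 1) - b i - 3))
          + max 0 (k - b 1 - 2) + max 0 (k - b r - 2))
    (k : ℤ) (hk2 : 2 ≤ k) (hkl : k ≤ lam) :
    φ (k + 2) - 2 * φ (k + 1) + φ k
        = (((Finset.Icc 1 (r - 1)).filter (fun i => k = b i + b (i + 1) + 2)).card : ℤ)
          + (if k = b 1 + 1 then 1 else 0) + (if k = b r + 1 then 1 else 0)
    ∧ φ (k + 2) - 2 * φ (k + 1) + φ k
        = (((Finset.Icc 0 r).filter (fun i => k = b i + b (i + 1) + 2)).card : ℤ) := by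
  classical
  -- linear part cancels
  have eA : (∑ i ∈ Finset.Icc 1 r, (b i - (k + 2) + 1))
      - 2 * (∑ i ∈ Finset.Icc 1 r, (b i - (k + 1) + 1))
      + (∑ i ∈ Finset.Icc 1 r, (b i - k + 1)) = 0 := by
    rw [Finset.mul_sum, ← Finset.sum_sub_distrib, ← Finset.sum_add_distrib]
    exact Finset.sum_eq_zero fun i _ => by ring
  -- second difference of the max-sum
  have eM : (∑ i ∈ Finset.Icc 1 (r - 1), max 0 ((k + 2) - b (i + 1) - b i - 3))
      - 2 * (∑ i ∈ Finset.Icc 1 (r - 1), max 0 ((k + 1) - b (i + 1) - b i - 3))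
      + (∑ i ∈ Finset.Icc 1 (r - 1), max 0 (k - b (i + 1) - b i - 3))
      = ∑ i ∈ Finset.Icc 1 (r - 1), (if k = b i + b (i + 1) + 2 then (1 : ℤ) else 0) := by
    rw [Finset.mul_sum, ← Finset.sum_sub_distrib, ← Finset.sum_add_distrib]
    refine Finset.sum_congr rfl fun i _ => ?_
    simp only [max_def]
    split_ifs <;> omega
  have e1 : max 0 ((k + 2) - b 1 - 2) - 2 * max 0 ((k + 1) - b 1 - 2)
      + max 0 (k - b 1 - 2) = (if k = b 1 + 1 then (1 : ℤ) else 0) := by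
    simp only [max_def]
    split_ifs <;> omega
  have er : max 0 ((k + 2) - b r - 2) - 2 * max 0 ((k + 1) - b r - 2)
      + max 0 (k - b r - 2) = (if k = b r + 1 then (1 : ℤ) else 0) := by
    simp only [max_def]
    split_ifs <;> omega
  have hcard : ∑ i ∈ Finset.Icc 1 (r - 1), (if k = b i + b (i + 1) + 2 then (1 : ℤ) else 0)
      = (((Finset.Icc 1 (r - 1)).filter (fun i => k = b i + b (i + 1) + 2)).card : ℤ) := by
    rw [Finset.card_filter]
    push_cast
    rfl
  have first : φ (k + 2) - 2 * φ (k + 1) + φ k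
      = (((Finset.Icc 1 (r - 1)).filter (fun i => k = b i + b (i + 1) + 2)).card : ℤ)
        + (if k = b 1 + 1 then 1 else 0) + (if k = b r + 1 then 1 else 0) := by
    rw [hφ, hφ, hφ, ← hcard]
    linarith [eA, eM, e1, er]
  refine ⟨first, ?_⟩
  rw [first]
  -- split Icc 0 r into {0} ∪ Icc 1 (r-1) ∪ {r}
  have h0r : Finset.Icc 0 r = insert 0 (Finset.Icc 1 r) := by
    ext i; simp [Finset.mem_Icc, Finset.mem_insert]; omega
  have h1r : Finset.Icc 1 r = insert r (Finset.Icc 1 (r - 1)) := by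
    ext i; simp [Finset.mem_Icc, Finset.mem_insert]; omega
  rw [h0r, h1r, Finset.filter_insert, Finset.filter_insert]
  have hnot0 : (0 : ℕ) ∉ insert r (Finset.Icc 1 (r - 1)) := by
    simp [Finset.mem_Icc]; omega
  have hnotr : r ∉ Finset.Icc 1 (r - 1) := by simp [Finset.mem_Icc]; omega
  have hc0 : (fun i => k = b i + b (i + 1) + 2) 0 = (k = b 1 + 1) := by
    show (k = b 0 + b 1 + 2) = (k = b 1 + 1)
    rw [hb0, eq_iff_iff]
    constructor <;> intro h <;> omega
  have hcr : (fun i => k = b i + b (i + 1) + 2) r = (k = b r + 1) := by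
    show (k = b r + b (r + 1) + 2) = (k = b r + 1)
    rw [hbr, eq_iff_iff]
    constructor <;> intro h <;> omega
  set F := (Finset.Icc 1 (r - 1)).filter (fun i => k = b i + b (i + 1) + 2) with hF
  have hrf : r ∉ F := fun h => hnotr (Finset.filter_subset _ _ h)
  have h0f : (0 : ℕ) ∉ F := by
    intro h
    have := Finset.filter_subset (fun i => k = b i + b (i + 1) + 2) (Finset.Icc 1 (r - 1)) h
    simp [Finset.mem_Icc] at this
  have h0i : (0 : ℕ) ∉ insert r F := by
    intro h
    rcases Finset.mem_insert.mp h with h | h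
    · omega
    · exact h0f h
  simp only [hc0, hcr]
  split_ifs with h0 hrr hrr
  · rw [Finset.card_insert_of_notMem h0i, Finset.card_insert_of_notMem hrf]
    push_cast; ring
  · rw [Finset.card_insert_of_notMem h0f]
    push_cast; ring
  · rw [Finset.card_insert_of_notMem hrf]
    push_cast; ring
  · ring
end

section
/- For d ≥ 1 and k ≥ 1, the linear map D_k := ∂_x ⊗ ∂_y - ∂_y ⊗ ∂_x : S^k U ⊗ S^d U → S^{k-1}U ⊗ S^{d-1}U is surjective, and its kernel equals the image of the polarization map p_k : S^{d+k}U → S^k U ⊗ S^d U given by p_k(f) = ((d)!/(d+k)!)·Σ_{i=0}^{k} C(k,i) x^{k-i}y^{i} ⊗ ∂_x^{k-i}∂_y^{i}(f); in particular p_k is injective and there is a short exact sequence 0 → S^{d+k}U → S^k U ⊗ S^d U → S^{k-1}U ⊗ S^{d-1}U → 0. -/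
/-!
Entry `(a, b)` of `D M` only involves `M (a, b + 1)`, with the nonzero coefficient
`(k - a)(b + 1)`, and `M (a + 1, b)`, so a preimage of any target matrix can be built column by
column, each column being forced by the previous one: `D` is surjective. The columns of `p c` are shifted copies of `c` with explicit
coefficients, and one checks directly that these coefficients satisfy the two-term recurrence
cut out by `D`, so `D ∘ p = 0`; `p` is injective because every coordinate of `c` appears with a
nonzero coefficient somewhere. Exactness in the middle is then a dimension count:
`(k + 1)(d + 1) = k d + (d + k + 1)`.
-/

open Module

theorem LinearMap.range_eq_ker_of_finrank_add_eq {K U V W : Type*} [Field K]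
    [AddCommGroup U] [Module K U] [AddCommGroup V] [Module K V] [AddCommGroup W] [Module K W]
    [FiniteDimensional K U] [FiniteDimensional K V]
    {f : U →ₗ[K] V} {g : V →ₗ[K] W} (hf : Function.Injective f) (hg : Function.Surjective g)
    (hgf : g ∘ₗ f = 0) (hdim : finrank K U + finrank K W = finrank K V) :
    range f = ker g := by
  refine Submodule.eq_of_le_of_finrank_eq ?_ ?_
  · rintro _ ⟨u, rfl⟩
    exact LinearMap.congr_fun hgf u
  · have := g.finrank_range_add_finrank_ker
    rw [LinearMap.range_eq_top.mpr hg, finrank_top] at this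
    rw [LinearMap.finrank_range_of_inj hf]
    omega

variable {K : Type*} [Field K]

def cayleyOmega (k d : ℕ) :
    Matrix (Fin (k + 1)) (Fin (d + 1)) K →ₗ[K] Matrix (Fin k) (Fin d) K where
  toFun M := Matrix.of fun a b =>
    ((k - (a : ℕ) : ℕ) : K) * (((b : ℕ) + 1 : ℕ) : K) * M a.castSucc b.succ
      - (((a : ℕ) + 1 : ℕ) : K) * ((d - (b : ℕ) : ℕ) : K) * M a.succ b.castSucc
  map_add' M N := by ext; simp only [Matrix.of_apply, Matrix.add_apply]; ring
  map_smul' r M := by ext; simp only [Matrix.of_apply, Matrix.smul_apply, smul_eq_mul,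
    RingHom.id_apply]; ring

def cayleyOmegaPreimageCol {k d : ℕ} (N : Matrix (Fin k) (Fin d) K) : ℕ → Fin (k + 1) → K
  | 0 => 0
  | b + 1 => fun a =>
    if h : (a : ℕ) < k ∧ b < d then
      (N ⟨a, h.1⟩ ⟨b, h.2⟩
          + (((a : ℕ) + 1 : ℕ) : K) * ((d - b : ℕ) : K)
            * cayleyOmegaPreimageCol N b ⟨(a : ℕ) + 1, by omega⟩)
        / (((k - (a : ℕ) : ℕ) : K) * ((b + 1 : ℕ) : K))
    else 0

theorem cayleyOmega_surjective [CharZero K] (k d : ℕ) :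
    Function.Surjective (cayleyOmega (K := K) k d) := by
  intro N
  refine ⟨Matrix.of fun a b => cayleyOmegaPreimageCol N b a, ?_⟩
  ext a b
  have hne : ((k - (a : ℕ) : ℕ) : K) * (((b : ℕ) + 1 : ℕ) : K) ≠ 0 := by
    refine mul_ne_zero ?_ ?_ <;> exact Nat.cast_ne_zero.mpr (by omega)
  simp only [cayleyOmega, LinearMap.coe_mk, AddHom.coe_mk, Matrix.of_apply, Fin.val_succ,
    Fin.val_castSucc, cayleyOmegaPreimageCol, dif_pos (And.intro a.isLt b.isLt)]
  rw [mul_div_cancel₀ _ hne]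
  exact add_sub_cancel_right _ _

/-- The coefficient of `c_(b+i)` in entry `(i, b)` of the polarization, up to the common
factor `d! / (d+k)!`: the monomial `x^(k-i) y^i` contributes `C(k,i)`, and `∂_x^(k-i) ∂_y^i`
sends `x^(d+k-b-i) y^(b+i)` to `(d+k-b-i)^{(k-i)} (b+i)^{(i)} x^(d-b) y^b` (falling factorials). -/
def polarCoeff (k d i b : ℕ) : ℕ :=
  k.choose i * (d + k - b - i).descFactorial (k - i) * (b + i).descFactorial i

theorem polarCoeff_pos {k d i b : ℕ} (hi : i ≤ k) (hb : b ≤ d) : 0 < polarCoeff k d i b := by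
  unfold polarCoeff
  have h₁ := Nat.choose_pos hi
  have h₂ : 0 < (d + k - b - i).descFactorial (k - i) :=
    Nat.descFactorial_pos.mpr (by omega)
  have h₃ : 0 < (b + i).descFactorial i := Nat.descFactorial_pos.mpr (by omega)
  positivity

theorem sub_mul_succ_mul_polarCoeff_succ {k d a b : ℕ} (ha : a < k) (hb : b < d) :
    (k - a) * (b + 1) * polarCoeff k d a (b + 1)
      = (a + 1) * (d - b) * polarCoeff k d (a + 1) b := by
  have h₁ : (d + k - (b + 1) - a).descFactorial (k - a)
      = (d - b) * (d + k - b - (a + 1)).descFactorial (k - (a + 1)) := by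
    rw [show d + k - (b + 1) - a = d + k - b - (a + 1) by omega,
      show k - a = k - (a + 1) + 1 by omega, Nat.descFactorial_succ]
    congr 1
    omega
  have h₂ : (b + (a + 1)).descFactorial (a + 1) = (b + 1) * (b + 1 + a).descFactorial a := by
    rw [show b + (a + 1) = b + 1 + a by omega, Nat.descFactorial_succ]
    congr 1
    omega
  unfold polarCoeff
  rw [h₁, h₂]
  linear_combination (b + 1) * (d - b) * (d + k - b - (a + 1)).descFactorial (k - (a + 1))
    * (b + 1 + a).descFactorial a * (Nat.choose_succ_right_eq k a).symm

def polarization (k d : ℕ) :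
    (Fin (d + k + 1) → K) →ₗ[K] Matrix (Fin (k + 1)) (Fin (d + 1)) K where
  toFun c := Matrix.of fun i b =>
    (polarCoeff k d i b : K) / ((d + k).descFactorial k : K)
      * c ⟨(b : ℕ) + (i : ℕ), by omega⟩
  map_add' c c' := by ext; simp only [Matrix.of_apply, Matrix.add_apply, Pi.add_apply]; ring
  map_smul' r c := by ext; simp only [Matrix.of_apply, Matrix.smul_apply, Pi.smul_apply,
    smul_eq_mul, RingHom.id_apply]; ring

theorem polarization_injective [CharZero K] (k d : ℕ) :
    Function.Injective (polarization (K := K) k d) := by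
  refine (injective_iff_map_eq_zero _).mpr fun c hc => funext fun n => ?_
  -- `c_n` sits in entry `(i, n - i)` with `i = min k n`
  have hn := n.isLt
  have h := congr_fun₂ hc ⟨min k n, by omega⟩ ⟨n - min k n, by omega⟩
  have hcoeff : (polarCoeff k d (min k n) (n - min k n) : K) ≠ 0 :=
    Nat.cast_ne_zero.mpr (polarCoeff_pos (min_le_left _ _) (by omega)).ne'
  have hdenom : ((d + k).descFactorial k : K) ≠ 0 :=
    Nat.cast_ne_zero.mpr (Nat.descFactorial_pos.mpr (by omega)).ne'
  simp only [polarization, LinearMap.coe_mk, AddHom.coe_mk, Matrix.of_apply,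
    Matrix.zero_apply, mul_eq_zero, div_eq_zero_iff, hcoeff, hdenom, or_self, false_or] at h
  simpa [Nat.sub_add_cancel (min_le_right k (n : ℕ))] using h

theorem cayleyOmega_comp_polarization (k d : ℕ) :
    cayleyOmega (K := K) k d ∘ₗ polarization k d = 0 := by
  refine LinearMap.ext fun c => Matrix.ext fun a b => ?_
  have key := congrArg (Nat.cast : ℕ → K) (sub_mul_succ_mul_polarCoeff_succ a.isLt b.isLt)
  simp only [Nat.cast_mul] at key
  have hidx : (b : ℕ) + 1 + a = b + (a + 1) := by omega
  simp only [cayleyOmega, polarization, LinearMap.coe_comp, LinearMap.coe_mk, AddHom.coe_mk,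
    Function.comp_apply, Matrix.of_apply, Fin.val_succ, Fin.val_castSucc, LinearMap.zero_apply,
    Matrix.zero_apply, hidx]
  linear_combination c ⟨b + (a + 1), by omega⟩ / ((d + k).descFactorial k : K) * key

theorem range_polarization_eq_ker_cayleyOmega [CharZero K] (k d : ℕ) :
    LinearMap.range (polarization (K := K) k d) = LinearMap.ker (cayleyOmega k d) := by
  refine LinearMap.range_eq_ker_of_finrank_add_eq (polarization_injective k d)
    (cayleyOmega_surjective k d) (cayleyOmega_comp_polarization k d) ?_
  simp only [finrank_fin_fun, Module.finrank_matrix, Module.finrank_self, Fintype.card_fin]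
  ring

/-- Proposition 2.5 i of the paper, in coordinates. Identify `S^m U` (homogeneous
polynomials of degree `m` in `x, y`) with `Fin (m+1) → ℂ` via the monomial basis
`x^(m-i) y^i ↔ i`, and `S^k U ⊗ S^d U` with `Matrix (Fin (k+1)) (Fin (d+1)) ℂ`.
Then `D_k = ∂_x ⊗ ∂_y - ∂_y ⊗ ∂_x : S^k U ⊗ S^d U → S^(k-1) U ⊗ S^(d-1) U` is given
by `(D M)ₐᵦ = (k-a)(b+1) M_{a,b+1} - (a+1)(d-b) M_{a+1,b}`, and the polarization map
`p_k(f) = (d!/(d+k)!) Σᵢ C(k,i) x^(k-i) y^i ⊗ ∂_x^(k-i) ∂_y^i f : S^(d+k) U → S^k U ⊗ S^d U`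
by `(p c)ᵢᵦ = C(k,i)·(d+k-b-i)!/(d-b)!·(b+i)!/b!/((d+k)!/d!)·c_(b+i)`.
Claim: `D` is linear and surjective, `p` is linear and injective, and
`ker D = im p`; i.e. `0 → S^(d+k)U → S^kU ⊗ S^dU → S^(k-1)U ⊗ S^(d-1)U → 0` is exact. -/
theorem stmt15 (d k : ℕ)
    (D : Matrix (Fin (k + 1)) (Fin (d + 1)) ℂ → Matrix (Fin k) (Fin d) ℂ)
    (hD : ∀ M a b, D M a b
        = ((k - (a : ℕ) : ℕ) : ℂ) * (((b : ℕ) + 1 : ℕ) : ℂ) * M a.castSucc b.succ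
          - (((a : ℕ) + 1 : ℕ) : ℂ) * ((d - (b : ℕ) : ℕ) : ℂ) * M a.succ b.castSucc)
    (p : (Fin (d + k + 1) → ℂ) → Matrix (Fin (k + 1)) (Fin (d + 1)) ℂ)
    (hp : ∀ c i b, p c i b
        = ((Nat.choose k (i : ℕ)
              * Nat.descFactorial (d + k - (b : ℕ) - (i : ℕ)) (k - (i : ℕ))
              * Nat.descFactorial ((b : ℕ) + (i : ℕ)) (i : ℕ) : ℕ) : ℂ)
            / ((Nat.descFactorial (d + k) k : ℕ) : ℂ)
            * c (⟨(b : ℕ) + (i : ℕ), by have := b.isLt; have := i.isLt; omega⟩ :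
                  Fin (d + k + 1))) :
    IsLinearMap ℂ D ∧ IsLinearMap ℂ p ∧ Function.Surjective D ∧ Function.Injective p
      ∧ {M | D M = 0} = Set.range p := by
  obtain rfl : D = cayleyOmega k d := funext fun M => Matrix.ext (hD M)
  obtain rfl : p = polarization k d := funext fun c => Matrix.ext (hp c)
  refine ⟨LinearMap.isLinear _, LinearMap.isLinear _, cayleyOmega_surjective k d,
    polarization_injective k d, ?_⟩
  ext M
  simp [← LinearMap.mem_range, range_polarization_eq_ker_cayleyOmega]
end

section
/- Let T ⊆ S^d U be spanned by monomials corresponding to intervals [α₁, β₁] ∪ ... ∪ [αᵣ, βᵣ] ⊆ [0, d] with α_{i+1} = βᵢ + 2 for all i = 2, ..., r. Then ∂T corresponds to the full interval [α₁ - 1, βᵣ], so dim(∂T) = βᵣ - α₁ + 2, and the monomial h := x^{d - α₁} y^{βᵣ} of degree d + βᵣ - α₁ satisfies ∂^{βᵣ - α₁ + 1}⟨h⟩ = ∂T. -/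
open MvPolynomial

/-- `∂T`: the span of all first partial derivatives of elements of `T`. -/
noncomputable def der (T : Submodule ℂ (MvPolynomial (Fin 2) ℂ)) :
    Submodule ℂ (MvPolynomial (Fin 2) ℂ) :=
  Submodule.span ℂ
    ((⇑(pderiv (0 : Fin 2))) '' (T : Set (MvPolynomial (Fin 2) ℂ))
      ∪ (⇑(pderiv (1 : Fin 2))) '' (T : Set (MvPolynomial (Fin 2) ℂ)))

/-- Span of the monomials `x^(d-i) y^i` for `i` in a set `S ⊆ [0, d]` of indices. -/
noncomputable def monSpan (d : ℕ) (S : Set ℕ) :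
    Submodule ℂ (MvPolynomial (Fin 2) ℂ) :=
  Submodule.span ℂ {m | ∃ i ∈ S, i ≤ d ∧ m = X 0 ^ (d - i) * X 1 ^ i}

lemma fs0 (a b : ℕ) : (Finsupp.single (0:Fin 2) a + Finsupp.single 1 b) - Finsupp.single 0 1
    = Finsupp.single (0:Fin 2) (a-1) + Finsupp.single 1 b := by
  ext x
  simp only [Finsupp.tsub_apply, Finsupp.add_apply, Finsupp.single_apply]
  fin_cases x <;> simp

lemma fs1 (a b : ℕ) : (Finsupp.single (0:Fin 2) a + Finsupp.single 1 b) - Finsupp.single 1 1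
    = Finsupp.single (0:Fin 2) a + Finsupp.single 1 (b-1) := by
  ext x
  simp only [Finsupp.tsub_apply, Finsupp.add_apply, Finsupp.single_apply]
  fin_cases x <;> simp

lemma pow_mul_eq_monomial (a b : ℕ) :
    (X 0 ^ a * X 1 ^ b : MvPolynomial (Fin 2) ℂ)
      = monomial (Finsupp.single 0 a + Finsupp.single 1 b) 1 := by
  rw [X_pow_eq_monomial, X_pow_eq_monomial, monomial_mul, one_mul]

lemma pd0 (a b : ℕ) : pderiv (0 : Fin 2) (X 0 ^ a * X 1 ^ b : MvPolynomial (Fin 2) ℂ)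
    = (a : ℂ) • (X 0 ^ (a - 1) * X 1 ^ b) := by
  rw [pow_mul_eq_monomial, pow_mul_eq_monomial, pderiv_monomial, fs0,
    smul_monomial, smul_eq_mul, mul_one, one_mul]
  simp [Finsupp.single_apply]

lemma pd1 (a b : ℕ) : pderiv (1 : Fin 2) (X 0 ^ a * X 1 ^ b : MvPolynomial (Fin 2) ℂ)
    = (b : ℂ) • (X 0 ^ a * X 1 ^ (b - 1)) := by
  rw [pow_mul_eq_monomial, pow_mul_eq_monomial, pderiv_monomial, fs1,
    smul_monomial, smul_eq_mul, mul_one, one_mul]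
  simp [Finsupp.single_apply]

lemma der_span (s : Set (MvPolynomial (Fin 2) ℂ)) :
    der (Submodule.span ℂ s) =
      Submodule.span ℂ ((⇑(pderiv (0:Fin 2))) '' s ∪ (⇑(pderiv (1:Fin 2))) '' s) := by
  unfold der
  rw [show ⇑(pderiv (0:Fin 2) : Derivation ℂ (MvPolynomial (Fin 2) ℂ) (MvPolynomial (Fin 2) ℂ))
      = ⇑(pderiv (0:Fin 2)).toLinearMap from rfl,
    show ⇑(pderiv (1:Fin 2) : Derivation ℂ (MvPolynomial (Fin 2) ℂ) (MvPolynomial (Fin 2) ℂ))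
      = ⇑(pderiv (1:Fin 2)).toLinearMap from rfl]
  rw [Submodule.span_union, Submodule.span_union]
  congr 1 <;>
  · rw [← Submodule.map_coe, Submodule.span_eq, Submodule.map_span]

lemma pderiv_mem_der {T : Submodule ℂ (MvPolynomial (Fin 2) ℂ)}
    {m : MvPolynomial (Fin 2) ℂ} (hm : m ∈ T) (j : Fin 2) :
    pderiv j m ∈ der T := by
  apply Submodule.subset_span
  fin_cases j
  · exact Or.inl ⟨m, hm, rfl⟩
  · exact Or.inr ⟨m, hm, rfl⟩

lemma mem_monSpan {e i : ℕ} {S : Set ℕ} (hi : i ∈ S) (hie : i ≤ e) :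
    (X 0 ^ (e - i) * X 1 ^ i : MvPolynomial (Fin 2) ℂ) ∈ monSpan e S :=
  Submodule.subset_span ⟨i, hi, hie, rfl⟩

lemma mem_der_x {e i : ℕ} {S : Set ℕ} (hi : i ∈ S) (hie : i < e) :
    (X 0 ^ (e - 1 - i) * X 1 ^ i : MvPolynomial (Fin 2) ℂ) ∈ der (monSpan e S) := by
  have h1 := pderiv_mem_der (mem_monSpan hi hie.le) 0
  rw [pd0] at h1
  have h2 := Submodule.smul_mem _ (((e - i : ℕ) : ℂ))⁻¹ h1
  rw [smul_smul, inv_mul_cancel₀ (by exact_mod_cast (by omega : e - i ≠ 0)), one_smul] at h2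
  have : e - i - 1 = e - 1 - i := by omega
  rwa [this] at h2

lemma mem_der_y {e i : ℕ} {S : Set ℕ} (hi : i + 1 ∈ S) (hie : i + 1 ≤ e) :
    (X 0 ^ (e - 1 - i) * X 1 ^ i : MvPolynomial (Fin 2) ℂ) ∈ der (monSpan e S) := by
  have h1 := pderiv_mem_der (mem_monSpan hi hie) 1
  rw [pd1] at h1
  have h2 := Submodule.smul_mem _ (((i + 1 : ℕ) : ℂ))⁻¹ h1
  rw [smul_smul, inv_mul_cancel₀ (by exact_mod_cast (by omega : i + 1 ≠ 0)), one_smul] at h2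
  have he : e - (i + 1) = e - 1 - i := by omega
  have hb : i + 1 - 1 = i := by omega
  rwa [he, hb] at h2

lemma der_monSpan_le {e : ℕ} {S : Set ℕ} {Q : Submodule ℂ (MvPolynomial (Fin 2) ℂ)}
    (h0 : ∀ i ∈ S, i ≤ e → pderiv (0:Fin 2) (X 0 ^ (e - i) * X 1 ^ i) ∈ Q)
    (h1 : ∀ i ∈ S, i ≤ e → pderiv (1:Fin 2) (X 0 ^ (e - i) * X 1 ^ i) ∈ Q) :
    der (monSpan e S) ≤ Q := by
  rw [monSpan, der_span]
  apply Submodule.span_le.2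
  rintro m (⟨x, ⟨i, hi, hle, rfl⟩, rfl⟩ | ⟨x, ⟨i, hi, hle, rfl⟩, rfl⟩)
  · exact h0 i hi hle
  · exact h1 i hi hle

lemma der_monSpan_Icc {e a b : ℕ} (ha : 1 ≤ a) (hab : a ≤ b) (hbe : b < e) :
    der (monSpan e (Set.Icc a b)) = monSpan (e - 1) (Set.Icc (a - 1) b) := by
  apply le_antisymm
  · apply der_monSpan_le
    · intro i hi hle
      obtain ⟨hia, hib⟩ := Set.mem_Icc.mp hi
      rw [pd0]
      apply Submodule.smul_mem
      have h : e - i - 1 = e - 1 - i := by omega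
      rw [h]
      exact mem_monSpan (Set.mem_Icc.mpr ⟨by omega, by omega⟩) (by omega)
    · intro i hi hle
      obtain ⟨hia, hib⟩ := Set.mem_Icc.mp hi
      rw [pd1]
      apply Submodule.smul_mem
      have h : e - i = e - 1 - (i - 1) := by omega
      rw [h]
      exact mem_monSpan (Set.mem_Icc.mpr ⟨by omega, by omega⟩) (by omega)
  · rw [monSpan]
    apply Submodule.span_le.2
    rintro m ⟨i, hi, hle, rfl⟩
    obtain ⟨hia', hib⟩ := Set.mem_Icc.mp hi
    by_cases hia : a ≤ i
    · exact mem_der_x (Set.mem_Icc.mpr ⟨hia, hib⟩) (by omega)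
    · have hiy : i + 1 = a := by omega
      exact mem_der_y (by rw [hiy]; exact Set.mem_Icc.mpr ⟨le_refl a, hab⟩) (by omega)

/-- Proposition 3.2 iii of the paper. `T ⊆ S^d U` is spanned by the monomials with
indices in `[α 1, β 1] ∪ ⋯ ∪ [α r, β r] ⊆ [0, d]` (with `2 ≤ α 1`, `β r ≤ d - 2`)
where consecutive intervals satisfy `α (n+1) = β n + 2`. Then `∂T` corresponds to
the full interval `[α 1 - 1, β r]` in degree `d - 1`, `dim ∂T = β r - α 1 + 2`, and
the monomial `h = x^(d - α 1) y^(β r)` of degree `d + β r - α 1` satisfies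
`∂^(β r - α 1 + 1)⟨h⟩ = ∂T`. -/
theorem stmt17 (d r : ℕ) (hr : 1 ≤ r) (α β : ℕ → ℕ)
    (hint : ∀ n ∈ Finset.Icc 1 r, α n ≤ β n)
    (hα1 : 2 ≤ α 1) (hβr : β r ≤ d - 2) (hd : 2 ≤ d)
    (hcons : ∀ n ∈ Finset.Icc 1 (r - 1), α (n + 1) = β n + 2)
    (T : Submodule ℂ (MvPolynomial (Fin 2) ℂ))
    (hT : T = monSpan d {i | ∃ n, 1 ≤ n ∧ n ≤ r ∧ α n ≤ i ∧ i ≤ β n})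
    (h : MvPolynomial (Fin 2) ℂ) (hh : h = X 0 ^ (d - α 1) * X 1 ^ (β r)) :
    der T = monSpan (d - 1) (Set.Icc (α 1 - 1) (β r))
      ∧ Module.finrank ℂ (der T) = β r - α 1 + 2
      ∧ der^[β r - α 1 + 1] (Submodule.span ℂ {h}) = der T := by
  have hd2 : β r + 2 ≤ d := by omega
  -- monotonicity of α
  have hαmono : ∀ k, 1 + k ≤ r → α 1 ≤ α (1 + k) := by
    intro k
    induction k with
    | zero => intro _; exact le_refl _
    | succ k ih =>
      intro hk
      have h1 : α 1 ≤ α (1 + k) := ih (by omega)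
      have h2 : α (1 + k) ≤ β (1 + k) := hint _ (by simp [Finset.mem_Icc]; omega)
      have h3 : α (1 + k + 1) = β (1 + k) + 2 := hcons _ (by simp [Finset.mem_Icc]; omega)
      have : 1 + (k + 1) = 1 + k + 1 := by omega
      rw [this]
      omega
  have hα1le : ∀ n, 1 ≤ n → n ≤ r → α 1 ≤ α n := by
    intro n h1 h2
    have := hαmono (n - 1) (by omega)
    have heq : 1 + (n - 1) = n := by omega
    rwa [heq] at this
  -- monotonicity of β
  have hβmono : ∀ k p, 1 ≤ p → p + k ≤ r → β p ≤ β (p + k) := by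
    intro k
    induction k with
    | zero => intro p _ _; exact le_refl _
    | succ k ih =>
      intro p hp hk
      have h1 : β p ≤ β (p + k) := ih p hp (by omega)
      have h3 : α (p + k + 1) = β (p + k) + 2 := hcons _ (by simp [Finset.mem_Icc]; omega)
      have h2 : α (p + k + 1) ≤ β (p + k + 1) := hint _ (by simp [Finset.mem_Icc]; omega)
      have : p + (k + 1) = p + k + 1 := by omega
      rw [this]
      omega
  have hβle : ∀ n, 1 ≤ n → n ≤ r → β n ≤ β r := by
    intro n h1 h2
    have := hβmono (r - n) n h1 (by omega)
    have heq : n + (r - n) = r := by omega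
    rwa [heq] at this
  have hαβ : α 1 ≤ β r := le_trans (hint 1 (by simp [Finset.mem_Icc]; omega)) (hβle 1 (le_refl 1) hr)
  set S : Set ℕ := {i | ∃ n, 1 ≤ n ∧ n ≤ r ∧ α n ≤ i ∧ i ≤ β n} with hS
  -- the covering property
  have cover : ∀ j, α 1 ≤ j → j ≤ β r → j ∈ S ∨ j + 1 ∈ S := by
    intro j hj1 hj2
    set F := (Finset.Icc 1 r).filter (fun n => α n ≤ j) with hF
    have h1F : 1 ∈ F := by
      simp only [hF, Finset.mem_filter, Finset.mem_Icc]
      exact ⟨⟨le_refl 1, hr⟩, hj1⟩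
    have hFne : F.Nonempty := ⟨1, h1F⟩
    obtain ⟨n, hnF, hmax⟩ : ∃ n ∈ F, ∀ m ∈ F, m ≤ n :=
      ⟨F.max' hFne, F.max'_mem hFne, fun m hm => F.le_max' m hm⟩
    simp only [hF, Finset.mem_filter, Finset.mem_Icc] at hnF
    obtain ⟨⟨hn1, hnr⟩, hnj⟩ := hnF
    by_cases hb : j ≤ β n
    · exact Or.inl ⟨n, hn1, hnr, hnj, hb⟩
    · push_neg at hb
      have hnr' : n ≠ r := by
        rintro rfl; omega
      have hc : α (n + 1) = β n + 2 := hcons n (by simp [Finset.mem_Icc]; omega)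
      have hnotF : ¬ α (n + 1) ≤ j := by
        intro hle
        have hmem : n + 1 ∈ F := by
          simp only [hF, Finset.mem_filter, Finset.mem_Icc]
          exact ⟨⟨by omega, by omega⟩, hle⟩
        have := hmax (n + 1) hmem
        omega
      have hint' := hint (n + 1) (by simp [Finset.mem_Icc]; omega)
      exact Or.inr ⟨n + 1, by omega, by omega, by omega, by omega⟩
  -- Part 1
  have part1 : der T = monSpan (d - 1) (Set.Icc (α 1 - 1) (β r)) := by
    rw [hT]
    apply le_antisymm
    · apply der_monSpan_le
      · rintro i ⟨n, hn1, hnr, hni, hin⟩ hid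
        rw [pd0]
        apply Submodule.smul_mem
        have hkey : d - i - 1 = d - 1 - i := by omega
        rw [hkey]
        have hi1 : α 1 ≤ i := le_trans (hα1le n hn1 hnr) hni
        have hi2 : i ≤ β r := le_trans hin (hβle n hn1 hnr)
        exact mem_monSpan ⟨by omega, hi2⟩ (by omega)
      · rintro i ⟨n, hn1, hnr, hni, hin⟩ hid
        rw [pd1]
        apply Submodule.smul_mem
        have hi1 : α 1 ≤ i := le_trans (hα1le n hn1 hnr) hni
        have hi2 : i ≤ β r := le_trans hin (hβle n hn1 hnr)
        have hkey : d - i = d - 1 - (i - 1) := by omega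
        rw [hkey]
        exact mem_monSpan ⟨by omega, by omega⟩ (by omega)
    · rw [monSpan]
      apply Submodule.span_le.2
      rintro m ⟨j, ⟨hj1, hj2⟩, hjd, rfl⟩
      by_cases hja : α 1 ≤ j
      · rcases cover j hja hj2 with hc | hc
        · exact mem_der_x hc (by omega)
        · exact mem_der_y hc (by omega)
      · have hj : j + 1 = α 1 := by omega
        have hαβ1 : α 1 ≤ β 1 := hint 1 (by simp [Finset.mem_Icc]; omega)
        have : j + 1 ∈ S := ⟨1, le_refl 1, hr, by omega, by omega⟩
        exact mem_der_y this (by omega)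
  refine ⟨part1, ?_, ?_⟩
  -- Part 2 : finrank
  · rw [part1]
    set a := α 1 - 1 with ha
    set k := β r - α 1 + 2 with hk
    set g : Fin k → MvPolynomial (Fin 2) ℂ :=
      fun j => X 0 ^ (d - 1 - (a + (j : ℕ))) * X 1 ^ (a + (j : ℕ)) with hg
    have hrange : Set.range g
        = {m | ∃ i ∈ Set.Icc a (β r), i ≤ d - 1 ∧ m = X 0 ^ (d - 1 - i) * X 1 ^ i} := by
      ext m
      constructor
      · rintro ⟨j, rfl⟩
        have hjk : (j : ℕ) < k := j.isLt
        exact ⟨a + (j : ℕ), ⟨by omega, by omega⟩, by omega, rfl⟩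
      · rintro ⟨i, ⟨hai, hib⟩, hid, rfl⟩
        refine ⟨⟨i - a, by omega⟩, ?_⟩
        simp only [hg]
        have : a + (i - a) = i := by omega
        rw [this]
    have hgli : LinearIndependent ℂ g := by
      have hgb : g = ⇑(basisMonomials (Fin 2) ℂ) ∘
          (fun j : Fin k => Finsupp.single (0 : Fin 2) (d - 1 - (a + (j : ℕ)))
            + Finsupp.single 1 (a + (j : ℕ))) := by
        funext j
        simp only [hg, Function.comp_apply, coe_basisMonomials]
        exact pow_mul_eq_monomial _ _
      rw [hgb]
      apply (basisMonomials (Fin 2) ℂ).linearIndependent.comp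
      intro j1 j2 heq
      have := congrArg (fun s => s (1 : Fin 2)) heq
      simp only [Finsupp.add_apply, Finsupp.single_apply] at this
      simp at this
      exact Fin.ext (by omega)
    rw [monSpan, ← hrange, finrank_span_eq_card hgli, Fintype.card_fin]
  -- Part 3 : iterating der on ⟨h⟩
  · set D := d - α 1 + β r with hD
    have hDβ : D - β r = d - α 1 := by omega
    have hspan : Submodule.span ℂ {h} = monSpan D {β r} := by
      rw [monSpan]
      congr 1
      ext m
      simp only [Set.mem_singleton_iff, Set.mem_setOf_eq]
      constructor
      · rintro rfl
        exact ⟨β r, rfl, by omega, by rw [hh, hDβ]⟩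
      · rintro ⟨i, hi, _, rfl⟩
        subst hi
        rw [hh, hDβ]
    have iter : ∀ t, t ≤ β r - α 1 + 1 →
        der^[t] (monSpan D (Set.Icc (β r) (β r))) = monSpan (D - t) (Set.Icc (β r - t) (β r)) := by
      intro t
      induction t with
      | zero => intro _; simp
      | succ t ih =>
        intro ht
        rw [Function.iterate_succ_apply', ih (by omega),
          der_monSpan_Icc (by omega) (by omega) (by omega)]
        have e1 : D - t - 1 = D - (t + 1) := by omega
        have e2 : β r - t - 1 = β r - (t + 1) := by omega
        rw [e1, e2]
    have e1 : D - (β r - α 1 + 1) = d - 1 := by omega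
    have e2 : β r - (β r - α 1 + 1) = α 1 - 1 := by omega
    rw [hspan, ← Set.Icc_self, iter (β r - α 1 + 1) (le_refl _), part1, e1, e2]
end
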